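/- Let e_1, ..., e_5 be the standard basis of R^5, let k ≥ 2 and λ = (k−1)/k. Define for one-hot symbols a, b, o, x the length-k traces z_1 = (1−λ)(x + Σ_{j=1}^{k−2} λ^j o + λ^{k−1} a) and z_2 = (1−λ)(x + Σ_{j=1}^{k−2} λ^j o + λ^{k−1} b), where a, b, o, x are distinct standard basis vectors (most recent observation first). Then ‖z_1 − z_2‖ = √2 (1−λ) λ^{k−1} ≥ √2/(e·k). -/

import Mathlib

/-!
The two traces differ only in the weight `(1 - λ) λ^(k-1)` of the oldest observation, so
`z₁ - z₂ = (1 - λ) λ^(k-1) • (a - b)`, and distinct orthonormal vectors are `√2` apart.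
For the lower bound, `1 - λ = 1/k` and `λ^(k-1) = (1 + 1/(k-1))^(-(k-1)) ≥ e⁻¹`.
-/

open Real

theorem Orthonormal.norm_sub_of_ne {ι E : Type*} [SeminormedAddCommGroup E] [InnerProductSpace ℝ E]
    {v : ι → E} (hv : Orthonormal ℝ v) {i j : ι} (hij : i ≠ j) : ‖v i - v j‖ = √2 := by
  rw [← Real.sqrt_sq (norm_nonneg _), norm_sub_sq_real, hv.1 i, hv.1 j, hv.2 hij]
  norm_num

theorem Real.exp_neg_one_le_sub_one_div_pow {k : ℕ} (hk : 1 ≤ k) :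
    exp (-1) ≤ (((k : ℝ) - 1) / k) ^ (k - 1) := by
  obtain ⟨m, rfl⟩ := Nat.exists_eq_add_of_le' hk
  rcases m.eq_zero_or_pos with rfl | hm
  · simp
  have hbase : ((m + 1 : ℕ) - 1 : ℝ) / (m + 1 : ℕ) = (1 + (m : ℝ)⁻¹)⁻¹ := by
    push_cast
    field_simp
    ring
  rw [hbase, Nat.add_sub_cancel, inv_pow, exp_neg]
  exact inv_anti₀ (by positivity) one_add_inv_pow_le_exp

theorem tmaze_trace_distance_general (k : ℕ) (hk : 2 ≤ k) (lam : ℝ)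
    (hlam : lam = ((k : ℝ) - 1) / k)
    (ia ib : Fin 5)
    (hab : ia ≠ ib)
    (a b o x z1 z2 : EuclideanSpace ℝ (Fin 5))
    (ha : a = EuclideanSpace.single ia 1) (hb : b = EuclideanSpace.single ib 1)
    (hz1 : z1 = (1 - lam) • (x + (∑ j ∈ Finset.Icc 1 (k - 2), lam ^ j • o) + lam ^ (k - 1) • a))
    (hz2 : z2 = (1 - lam) • (x + (∑ j ∈ Finset.Icc 1 (k - 2), lam ^ j • o) + lam ^ (k - 1) • b)) :
    ‖z1 - z2‖ = Real.sqrt 2 * (1 - lam) * lam ^ (k - 1) ∧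
    Real.sqrt 2 / (Real.exp 1 * k) ≤ ‖z1 - z2‖ := by
  have hk₀ : (1 : ℝ) ≤ k := by exact_mod_cast (by omega : 1 ≤ k)
  have hgap : 1 - lam = (k : ℝ)⁻¹ := by
    rw [hlam]
    field_simp
    ring
  have hlam₀ : 0 ≤ lam := by
    rw [hlam]
    exact div_nonneg (by linarith) (by linarith)
  have hdiff : z1 - z2 = ((1 - lam) * lam ^ (k - 1)) • (a - b) := by
    rw [hz1, hz2]
    module
  have hab_norm : ‖a - b‖ = √2 := by
    rw [ha, hb]
    exact EuclideanSpace.orthonormal_single.norm_sub_of_ne hab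
  have hnorm : ‖z1 - z2‖ = √2 * (1 - lam) * lam ^ (k - 1) := by
    rw [hdiff, norm_smul, hab_norm, Real.norm_of_nonneg (by rw [hgap]; positivity)]
    ring
  refine ⟨hnorm, ?_⟩
  calc √2 / (exp 1 * k) = √2 * (k : ℝ)⁻¹ * exp (-1) := by
        rw [exp_neg]
        field_simp
    _ ≤ √2 * (1 - lam) * lam ^ (k - 1) := by
        rw [hgap, hlam]
        gcongr
        exact exp_neg_one_le_sub_one_div_pow (by omega)
    _ = ‖z1 - z2‖ := hnorm.symm

/-- T-maze trace distance: the traces of the histories a·o^{k−2}·x and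
b·o^{k−2}·x (with λ = (k−1)/k) are at distance exactly √2(1−λ)λ^{k−1},
which is at least √2/(e·k). -/
theorem tmaze_trace_distance (k : ℕ) (hk : 2 ≤ k) (lam : ℝ)
    (hlam : lam = ((k : ℝ) - 1) / k)
    (ia ib io ix : Fin 5)
    (hab : ia ≠ ib) (hao : ia ≠ io) (hax : ia ≠ ix)
    (hbo : ib ≠ io) (hbx : ib ≠ ix) (hox : io ≠ ix)
    (a b o x z1 z2 : EuclideanSpace ℝ (Fin 5))
    (ha : a = EuclideanSpace.single ia 1) (hb : b = EuclideanSpace.single ib 1)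
    (ho : o = EuclideanSpace.single io 1) (hx : x = EuclideanSpace.single ix 1)
    (hz1 : z1 = (1 - lam) • (x + (∑ j ∈ Finset.Icc 1 (k - 2), lam ^ j • o) + lam ^ (k - 1) • a))
    (hz2 : z2 = (1 - lam) • (x + (∑ j ∈ Finset.Icc 1 (k - 2), lam ^ j • o) + lam ^ (k - 1) • b)) :
    ‖z1 - z2‖ = Real.sqrt 2 * (1 - lam) * lam ^ (k - 1) ∧
    Real.sqrt 2 / (Real.exp 1 * k) ≤ ‖z1 - z2‖ :=
  tmaze_trace_distance_general k hk lam hlam ia ib hab a b o x z1 z2 ha hb hz1 hz2
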